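/- In a symmetric base game: for every BCE p there exists a symmetric BCE q (defined by averaging p over all permutations of players) such that the utilitarian gross welfare satisfies w̄(q) = w̄(p) and the utilitarian uninformed welfare satisfies w̲(q) ≤ w̲(p). Consequently, the minimum of w̄ and the minimum of w̲ over all BCEs are both attained at symmetric BCEs. -/
import Mathlib


open Finset

set_option linter.unusedSectionVars false
set_option maxHeartbeats 1000000

/-- The obedience constraint (BCE) for a game with common action set `A`. -/
def Obedient {I : Type} [Fintype I] [DecidableEq I] {A : Type} [Fintype A]
    [DecidableEq A] {Θ : Type} [Fintype Θ]
    (u : I → ((I → A) × Θ) → ℝ) (p : ((I → A) × Θ) → ℝ) : Prop :=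
  ∀ i : I, ∀ ai bi : A,
    0 ≤ ∑ x : (I → A) × Θ,
      (if x.1 i = ai then (u i x - u i (Function.update x.1 i bi, x.2)) * p x else 0)

/-- `p` is an outcome with `Θ`-marginal `π`. -/
def IsOutcome {I : Type} [Fintype I] [DecidableEq I] {A : Type} [Fintype A] {Θ : Type} [Fintype Θ]
    (π : Θ → ℝ) (p : ((I → A) × Θ) → ℝ) : Prop :=
  (∀ x, 0 ≤ p x) ∧ ∀ θ, (∑ a : I → A, p (a, θ)) = π θ

/-- A symmetric outcome: invariant under permutations of the players. -/
def SymmOutcome {I : Type} [Fintype I] [DecidableEq I] {A : Type} [Fintype A] {Θ : Type} [Fintype Θ]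
    (p : ((I → A) × Θ) → ℝ) : Prop :=
  ∀ (φ : Equiv.Perm I) (a : I → A) (θ : Θ), p (a ∘ φ, θ) = p (a, θ)

/-- Utilitarian gross welfare `w̄(p)`. -/
noncomputable def wbar {I : Type} [Fintype I] [DecidableEq I] {A : Type} [Fintype A] {Θ : Type}
    [Fintype Θ] (u : I → ((I → A) × Θ) → ℝ) (p : ((I → A) × Θ) → ℝ) : ℝ :=
  ∑ i : I, ∑ x : (I → A) × Θ, u i x * p x

/-- Utilitarian uninformed welfare `w̲(p)`: each player best-responds with a
constant action to the unconditional distribution. -/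
noncomputable def wund {I : Type} [Fintype I] [DecidableEq I] {A : Type}
    [Fintype A] [DecidableEq A] [Nonempty A] {Θ : Type} [Fintype Θ]
    (u : I → ((I → A) × Θ) → ℝ) (p : ((I → A) × Θ) → ℝ) : ℝ :=
  ∑ i : I, univ.sup' Finset.univ_nonempty fun bi : A =>
    ∑ x : (I → A) × Θ, u i (Function.update x.1 i bi, x.2) * p x

section Aux

variable {I : Type} [Fintype I] [DecidableEq I] {A : Type} [Fintype A]
  [DecidableEq A] [Nonempty A] {Θ : Type} [Fintype Θ]

/-! ### Generic helper lemmas -/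

lemma clm_eq_sum' {X : Type} [Fintype X] [DecidableEq X] (f : ((X → ℝ)) →L[ℝ] ℝ) (z : X → ℝ) :
    f z = ∑ a : X, z a * f (Pi.single a 1) := by
  conv_lhs => rw [pi_eq_sum_univ z, map_sum]
  refine Finset.sum_congr rfl fun a _ => ?_
  have h : (fun j => if a = j then (1:ℝ) else 0) = Pi.single a (1:ℝ) := by
    funext j; simp [Pi.single_apply, eq_comm]
  rw [h, map_smul, smul_eq_mul]

lemma sum_comp_perm' (f : (I → A) → ℝ) (φ : Equiv.Perm I) :
    ∑ a : I → A, f (a ∘ φ) = ∑ a : I → A, f a :=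
  Fintype.sum_equiv (Equiv.arrowCongr φ.symm (Equiv.refl A)) _ _ (fun _ => rfl)

lemma update_comp_perm' (a : I → A) (ψ : Equiv.Perm I) (i : I) (c : A) :
    Function.update (a ∘ ψ) i c = (Function.update a (ψ i) c) ∘ ψ := by
  funext j
  by_cases h : j = i
  · subst h; simp
  · simp [Function.update_apply, h, EmbeddingLike.apply_eq_iff_eq, Function.comp]

/-! ### Existence of a BCE via hyperplane separation -/

def swapUpd' (i : I) : ((I → A) × A) ≃ ((I → A) × A) where
  toFun x := (Function.update x.1 i x.2, x.1 i)
  invFun x := (Function.update x.1 i x.2, x.1 i)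
  left_inv := by rintro ⟨a, b⟩; simp
  right_inv := by rintro ⟨a, b⟩; simp

lemma exists_stationary' (lam : A → A → ℝ) (hlam : ∀ a b, 0 ≤ lam a b) :
    ∃ σ : A → ℝ, (∀ a, 0 ≤ σ a) ∧ (∑ a, σ a) = 1 ∧
      ∀ c, ∑ b, σ b * lam b c = σ c * ∑ b, lam c b := by
  classical
  set T : (A → ℝ) →ₗ[ℝ] (A → ℝ) :=
    { toFun := fun σ c => ∑ b, σ b * lam b c - σ c * ∑ b, lam c b
      map_add' := by
        intro x y; funext c
        simp [add_mul, Finset.sum_add_distrib]; ring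
      map_smul' := by
        intro r x; funext c
        simp only [smul_eq_mul, Pi.smul_apply, RingHom.id_apply]
        rw [mul_sub, Finset.mul_sum, Finset.mul_sum]
        congr 1
        · exact Finset.sum_congr rfl fun b _ => by ring
        · rw [Finset.mul_sum, Finset.mul_sum]
          exact Finset.sum_congr rfl fun b _ => by ring } with hT
  set Δ : Set (A → ℝ) := {σ | (∀ a, 0 ≤ σ a) ∧ (∑ a, σ a) = 1} with hΔ
  have hΔconv : Convex ℝ Δ := by
    rintro x ⟨hx0, hx1⟩ y ⟨hy0, hy1⟩ s t hs ht hst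
    constructor
    · intro a
      simp only [Pi.add_apply, Pi.smul_apply, smul_eq_mul]
      exact add_nonneg (mul_nonneg hs (hx0 a)) (mul_nonneg ht (hy0 a))
    · simp only [Pi.add_apply, Pi.smul_apply, smul_eq_mul, Finset.sum_add_distrib,
        ← Finset.mul_sum, hx1, hy1]
      linarith
  have hΔcomp : IsCompact Δ := by
    have hsub : Δ ⊆ Set.pi Set.univ (fun _ : A => Set.Icc (0:ℝ) 1) := by
      rintro σ ⟨h0, h1⟩ a _
      refine ⟨h0 a, ?_⟩
      calc σ a ≤ ∑ b, σ b := Finset.single_le_sum (fun b _ => h0 b) (mem_univ a)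
      _ = 1 := h1
    have hclosed : IsClosed Δ := by
      have h1 : IsClosed {σ : A → ℝ | ∀ a, 0 ≤ σ a} := by
        have e : {σ : A → ℝ | ∀ a, 0 ≤ σ a} = ⋂ a, {σ | 0 ≤ σ a} := by ext σ; simp
        rw [e]
        exact isClosed_iInter fun a => isClosed_le continuous_const (continuous_apply a)
      have h2 : IsClosed {σ : A → ℝ | (∑ a, σ a) = 1} :=
        isClosed_eq (by continuity) continuous_const
      rw [hΔ, Set.setOf_and]
      exact h1.inter h2
    exact (isCompact_univ_pi fun _ => isCompact_Icc).of_isClosed_subset hclosed hsub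
  by_contra hno
  push_neg at hno
  have h0notin : (0 : A → ℝ) ∉ T '' Δ := by
    rintro ⟨σ, hσ, hσ0⟩
    obtain ⟨c, hc⟩ := hno σ hσ.1 hσ.2
    exact hc (by have := congrFun hσ0 c; simpa [hT, sub_eq_zero] using this)
  have hTcont : Continuous T := T.continuous_of_finiteDimensional
  obtain ⟨f, u, v, hfu, huv, hvf⟩ :=
    geometric_hahn_banach_compact_closed ((hΔconv.linear_image T))
      (hΔcomp.image hTcont) (convex_singleton 0) isClosed_singleton
      (Set.disjoint_singleton_right.2 h0notin)
  have hv0 : v < 0 := by simpa using hvf 0 rfl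
  obtain ⟨a₀, -, ha₀⟩ := Finset.exists_min_image univ (fun a => f (Pi.single a 1))
    univ_nonempty
  set σ : A → ℝ := Pi.single a₀ 1 with hσ
  have hσΔ : σ ∈ Δ := by
    constructor
    · intro a; by_cases h : a = a₀ <;> simp [hσ, Pi.single_apply, h]
    · simp [hσ]
  have hlt : f (T σ) < u := hfu _ ⟨σ, hσΔ, rfl⟩
  have hTσ : ∀ c, T σ c = lam a₀ c - (if c = a₀ then (∑ b, lam a₀ b) else 0) := by
    intro c
    simp only [hT, LinearMap.coe_mk, AddHom.coe_mk, hσ]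
    rw [Finset.sum_eq_single a₀ (by intro b _ hb; simp [Pi.single_apply, hb]) (by simp)]
    by_cases h : c = a₀ <;> simp [Pi.single_apply, h]
  have hge : 0 ≤ f (T σ) := by
    rw [clm_eq_sum']
    have e1 : ∀ c, T σ c * f (Pi.single c 1)
        = lam a₀ c * f (Pi.single c 1)
          - (if c = a₀ then (∑ b, lam a₀ b) * f (Pi.single c 1) else 0) := by
      intro c; rw [hTσ c]; by_cases h : c = a₀ <;> simp [h] <;> ring
    rw [Finset.sum_congr rfl fun c _ => e1 c, Finset.sum_sub_distrib,
      Finset.sum_ite_eq' univ a₀]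
    simp only [mem_univ, if_true]
    have e2 : ∑ c, lam a₀ c * (f (Pi.single c 1) - f (Pi.single a₀ 1))
        = ∑ c, lam a₀ c * f (Pi.single c 1) - (∑ c, lam a₀ c) * f (Pi.single a₀ 1) := by
      rw [Finset.sum_mul, ← Finset.sum_sub_distrib]
      exact Finset.sum_congr rfl fun c _ => by ring
    have e3 : 0 ≤ ∑ c, lam a₀ c * (f (Pi.single c 1) - f (Pi.single a₀ 1)) :=
      Finset.sum_nonneg fun c _ =>
        mul_nonneg (hlam _ _) (sub_nonneg.2 (ha₀ c (mem_univ c)))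
    linarith [e2 ▸ e3]
  linarith [hlt, huv, hv0]

lemma dev_eq_keep' (i : I) (lam : A → A → ℝ) (σ : I → A → ℝ)
    (hst : ∀ c, ∑ b, σ i b * lam b c = σ i c * ∑ b, lam c b) (g : (I → A) → ℝ) :
    ∑ ab : (I → A) × A,
        g (Function.update ab.1 i ab.2) * (∏ j, σ j (ab.1 j)) * lam (ab.1 i) ab.2
      = ∑ a : I → A, g a * (∏ j, σ j (a j)) * (∑ b, lam (a i) b) := by
  classical
  set P : (I → A) → ℝ := fun a => ∏ j ∈ univ.erase i, σ j (a j) with hPdef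
  have hfull : ∀ a : I → A, (∏ j, σ j (a j)) = σ i (a i) * P a := fun a =>
    (Finset.mul_prod_erase univ _ (mem_univ i)).symm
  have hP : ∀ (a : I → A) (b : A), P (Function.update a i b) = P a := by
    intro a b
    exact Finset.prod_congr rfl fun j hj => by
      rw [Function.update_of_ne (Finset.ne_of_mem_erase hj)]
  set F : ((I → A) × A) → ℝ := fun ab =>
    g (Function.update ab.1 i ab.2) * (∏ j, σ j (ab.1 j)) * lam (ab.1 i) ab.2 with hFdef
  have hF : ∀ ab : (I → A) × A,
      F (swapUpd' i ab) = g ab.1 * (σ i ab.2 * P ab.1) * lam ab.2 (ab.1 i) := by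
    rintro ⟨a, b⟩
    simp only [hFdef, swapUpd', Equiv.coe_fn_mk]
    rw [Function.update_idem, Function.update_eq_self, Function.update_self,
      hfull (Function.update a i b), Function.update_self, hP]
  calc ∑ ab : (I → A) × A, F ab
      = ∑ ab : (I → A) × A, F (swapUpd' i ab) := (Equiv.sum_comp (swapUpd' i) F).symm
    _ = ∑ ab : (I → A) × A, g ab.1 * (σ i ab.2 * P ab.1) * lam ab.2 (ab.1 i) :=
        Finset.sum_congr rfl fun ab _ => hF ab
    _ = ∑ a : I → A, ∑ b : A, g a * (σ i b * P a) * lam b (a i) :=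
        Fintype.sum_prod_type _
    _ = ∑ a : I → A, g a * P a * (∑ b, σ i b * lam b (a i)) := by
        refine Finset.sum_congr rfl fun a _ => ?_
        rw [Finset.mul_sum]
        exact Finset.sum_congr rfl fun b _ => by ring
    _ = ∑ a : I → A, g a * (∏ j, σ j (a j)) * (∑ b, lam (a i) b) := by
        refine Finset.sum_congr rfl fun a _ => ?_
        rw [hst (a i), hfull a]; ring

def coefOb (u : I → ((I → A) × Θ) → ℝ) (k : I × A × A) (x : (I → A) × Θ) : ℝ :=
  if x.1 k.1 = k.2.1 then u k.1 x - u k.1 (Function.update x.1 k.1 k.2.2, x.2) else 0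

lemma obedient_iff' (u : I → ((I → A) × Θ) → ℝ) (p : ((I → A) × Θ) → ℝ) :
    Obedient u p ↔ ∀ k : I × A × A, 0 ≤ ∑ x : (I → A) × Θ, coefOb u k x * p x := by
  have he : ∀ (i : I) (ai bi : A),
      (∑ x : (I → A) × Θ,
        (if x.1 i = ai then (u i x - u i (Function.update x.1 i bi, x.2)) * p x else 0))
      = ∑ x : (I → A) × Θ, coefOb u (i, ai, bi) x * p x := by
    intro i ai bi
    refine Finset.sum_congr rfl fun x _ => ?_
    rw [coefOb, ite_mul, zero_mul]
  constructor
  · rintro h ⟨i, ai, bi⟩; rw [← he]; exact h i ai bi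
  · intro h i ai bi; rw [he]; exact h (i, ai, bi)

noncomputable def obMap (u : I → ((I → A) × Θ) → ℝ) :
    (((I → A) × Θ) → ℝ) →ₗ[ℝ] ((I × A × A) → ℝ) where
  toFun p k := ∑ x : (I → A) × Θ, coefOb u k x * p x
  map_add' p q := by
    funext k; simp [mul_add, Finset.sum_add_distrib]
  map_smul' r p := by
    funext k
    simp only [smul_eq_mul, Pi.smul_apply, RingHom.id_apply]
    rw [Finset.mul_sum]
    exact Finset.sum_congr rfl fun x _ => by ring

lemma outcome_convex (π : Θ → ℝ) :
    Convex ℝ {p : ((I → A) × Θ) → ℝ | IsOutcome π p} := by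
  rintro p ⟨hp0, hp1⟩ q ⟨hq0, hq1⟩ s t hs ht hst
  constructor
  · intro x
    simp only [Pi.add_apply, Pi.smul_apply, smul_eq_mul]
    exact add_nonneg (mul_nonneg hs (hp0 x)) (mul_nonneg ht (hq0 x))
  · intro θ
    simp only [Pi.add_apply, Pi.smul_apply, smul_eq_mul, Finset.sum_add_distrib,
      ← Finset.mul_sum, hp1, hq1]
    rw [← add_mul, hst, one_mul]

lemma outcome_compact (π : Θ → ℝ) :
    IsCompact {p : ((I → A) × Θ) → ℝ | IsOutcome π p} := by
  set S := {p : ((I → A) × Θ) → ℝ | IsOutcome π p} with hSdef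
  have hsub : S ⊆ Set.pi Set.univ (fun x : (I → A) × Θ => Set.Icc (0:ℝ) (π x.2)) := by
    rintro p ⟨h0, h1⟩ x _
    refine ⟨h0 x, ?_⟩
    calc p x = p (x.1, x.2) := by rw [Prod.mk.eta]
    _ ≤ ∑ a : I → A, p (a, x.2) :=
        Finset.single_le_sum (fun a _ => h0 (a, x.2)) (mem_univ x.1)
    _ = π x.2 := h1 x.2
  have hclosed : IsClosed S := by
    have h1 : IsClosed {p : ((I → A) × Θ) → ℝ | ∀ x, 0 ≤ p x} := by
      have e : {p : ((I → A) × Θ) → ℝ | ∀ x, 0 ≤ p x} = ⋂ x, {p | 0 ≤ p x} := by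
        ext p; simp
      rw [e]
      exact isClosed_iInter fun x => isClosed_le continuous_const (continuous_apply x)
    have h2 : IsClosed {p : ((I → A) × Θ) → ℝ | ∀ θ, (∑ a : I → A, p (a, θ)) = π θ} := by
      have e : {p : ((I → A) × Θ) → ℝ | ∀ θ, (∑ a : I → A, p (a, θ)) = π θ}
          = ⋂ θ, {p | (∑ a : I → A, p (a, θ)) = π θ} := by ext p; simp
      rw [e]
      exact isClosed_iInter fun θ => isClosed_eq (by continuity) continuous_const
    have e : S = {p : ((I → A) × Θ) → ℝ | ∀ x, 0 ≤ p x}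
        ∩ {p | ∀ θ, (∑ a : I → A, p (a, θ)) = π θ} := rfl
    rw [e]; exact h1.inter h2
  exact (isCompact_univ_pi fun _ => isCompact_Icc).of_isClosed_subset hclosed hsub

lemma exists_BCE (π : Θ → ℝ) (hπpos : ∀ θ, 0 < π θ) (u : I → ((I → A) × Θ) → ℝ) :
    ∃ p : ((I → A) × Θ) → ℝ, IsOutcome π p ∧ Obedient u p := by
  classical
  by_contra hno
  push_neg at hno
  set S : Set (((I → A) × Θ) → ℝ) := {p | IsOutcome π p} with hSdef
  have hSconv : Convex ℝ S := outcome_convex π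
  have hScomp : IsCompact S := outcome_compact π
  set G := obMap u with hGdef
  set O : Set ((I × A × A) → ℝ) := {y | ∀ k, 0 ≤ y k} with hOdef
  have hOconv : Convex ℝ O := by
    rintro y hy z hz s t hs ht hst k
    simp only [Pi.add_apply, Pi.smul_apply, smul_eq_mul]
    exact add_nonneg (mul_nonneg hs (hy k)) (mul_nonneg ht (hz k))
  have hOclosed : IsClosed O := by
    have e : O = ⋂ k, {y : (I × A × A) → ℝ | 0 ≤ y k} := by ext y; simp [hOdef]
    rw [e]
    exact isClosed_iInter fun k => isClosed_le continuous_const (continuous_apply k)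
  have hdisj : Disjoint (G '' S) O := by
    rw [Set.disjoint_left]
    rintro y ⟨p, hpS, rfl⟩ hyO
    exact hno p hpS ((obedient_iff' u p).2 hyO)
  obtain ⟨f, uu, vv, hfu, huv, hvf⟩ :=
    geometric_hahn_banach_compact_closed (hSconv.linear_image G)
      (hScomp.image G.continuous_of_finiteDimensional) hOconv hOclosed hdisj
  have hv0 : vv < 0 := by
    have := hvf 0 (fun k => le_refl 0)
    simpa using this
  set lamf : (I × A × A) → ℝ := fun k => f (Pi.single k 1) with hlamdef
  have hlamnn : ∀ k, 0 ≤ lamf k := by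
    intro k
    by_contra hk
    push_neg at hk
    have hy : (((vv - 1) / lamf k) • (Pi.single k 1 : (I × A × A) → ℝ)) ∈ O := by
      intro k'
      simp only [Pi.smul_apply, smul_eq_mul]
      refine mul_nonneg (div_nonneg_of_nonpos (by linarith) hk.le) ?_
      by_cases h : k' = k <;> simp [Pi.single_apply, h]
    have := hvf _ hy
    rw [map_smul, smul_eq_mul] at this
    rw [div_mul_cancel₀ _ (ne_of_lt hk)] at this
    linarith
  have hkey : ∀ p ∈ S, (∑ k : I × A × A, G p k * lamf k) < 0 := by
    intro p hp
    have h1 : f (G p) < uu := hfu _ ⟨p, hp, rfl⟩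
    have h2 := clm_eq_sum' f (G p)
    rw [h2] at h1
    calc (∑ k : I × A × A, G p k * lamf k) < uu := h1
    _ < vv := huv
    _ < 0 := hv0
  choose σ hσ0 hσ1 hσst using fun i : I =>
    exists_stationary' (fun c b => lamf (i, c, b)) (fun c b => hlamnn _)
  set pstar : ((I → A) × Θ) → ℝ := fun x => π x.2 * ∏ j, σ j (x.1 j) with hpstar
  have hpS : pstar ∈ S := by
    constructor
    · intro x
      exact mul_nonneg (hπpos _).le (Finset.prod_nonneg fun j _ => hσ0 j _)
    · intro θ
      simp only [hpstar]
      rw [← Finset.mul_sum]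
      have e : ∑ a : I → A, ∏ j, σ j (a j) = ∏ j, ∑ b, σ j b :=
        (Fintype.prod_sum (fun j b => σ j b)).symm
      rw [e]
      have : ∏ j : I, ∑ b, σ j b = 1 := by
        rw [Finset.prod_congr rfl fun j _ => hσ1 j, Finset.prod_const_one]
      rw [this, mul_one]
  have hzero : (∑ k : I × A × A, G pstar k * lamf k) = 0 := by
    rw [Fintype.sum_prod_type]
    refine Finset.sum_eq_zero fun i _ => ?_
    have step1 : ∑ cb : A × A, G pstar (i, cb) * lamf (i, cb)
        = ∑ x : (I → A) × Θ, ∑ b : A,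
            (u i x - u i (Function.update x.1 i b, x.2)) * pstar x * lamf (i, x.1 i, b) := by
      have e1 : ∑ cb : A × A, G pstar (i, cb) * lamf (i, cb)
          = ∑ cb : A × A, ∑ x : (I → A) × Θ,
              coefOb u (i, cb.1, cb.2) x * pstar x * lamf (i, cb.1, cb.2) := by
        refine Finset.sum_congr rfl fun cb _ => ?_
        rw [show G pstar (i, cb) = ∑ x : (I → A) × Θ, coefOb u (i, cb.1, cb.2) x * pstar x
          from rfl, Finset.sum_mul]
      rw [e1, Finset.sum_comm]
      refine Finset.sum_congr rfl fun x _ => ?_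
      rw [Fintype.sum_prod_type, Finset.sum_comm]
      refine Finset.sum_congr rfl fun b _ => ?_
      simp only [coefOb, ite_mul, zero_mul]
      rw [Finset.sum_ite_eq univ (x.1 i)
        (fun c => (u i x - u i (Function.update x.1 i b, x.2)) * pstar x * lamf (i, c, b))]
      simp
    rw [step1]
    have step2 : ∑ x : (I → A) × Θ, ∑ b : A,
            (u i x - u i (Function.update x.1 i b, x.2)) * pstar x * lamf (i, x.1 i, b)
        = (∑ x : (I → A) × Θ, ∑ b : A, u i x * pstar x * lamf (i, x.1 i, b))
          - ∑ x : (I → A) × Θ, ∑ b : A,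
              u i (Function.update x.1 i b, x.2) * pstar x * lamf (i, x.1 i, b) := by
      rw [← Finset.sum_sub_distrib]
      refine Finset.sum_congr rfl fun x _ => ?_
      rw [← Finset.sum_sub_distrib]
      exact Finset.sum_congr rfl fun b _ => by ring
    rw [step2, sub_eq_zero]
    have hkeepform : (∑ x : (I → A) × Θ, ∑ b : A, u i x * pstar x * lamf (i, x.1 i, b))
        = ∑ θ : Θ, π θ * ∑ a : I → A,
            u i (a, θ) * (∏ j, σ j (a j)) * (∑ b, lamf (i, a i, b)) := by
      rw [Fintype.sum_prod_type, Finset.sum_comm]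
      refine Finset.sum_congr rfl fun θ _ => ?_
      rw [Finset.mul_sum]
      refine Finset.sum_congr rfl fun a _ => ?_
      rw [Finset.mul_sum, Finset.mul_sum]
      exact Finset.sum_congr rfl fun b _ => by simp only [hpstar]; ring
    have hdevform : (∑ x : (I → A) × Θ, ∑ b : A,
            u i (Function.update x.1 i b, x.2) * pstar x * lamf (i, x.1 i, b))
        = ∑ θ : Θ, π θ * ∑ ab : (I → A) × A,
            u i (Function.update ab.1 i ab.2, θ) * (∏ j, σ j (ab.1 j))
              * lamf (i, ab.1 i, ab.2) := by
      rw [Fintype.sum_prod_type, Finset.sum_comm]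
      refine Finset.sum_congr rfl fun θ _ => ?_
      rw [Finset.mul_sum, Fintype.sum_prod_type]
      refine Finset.sum_congr rfl fun a _ => ?_
      exact Finset.sum_congr rfl fun b _ => by simp only [hpstar]; ring
    rw [hkeepform, hdevform]
    refine Finset.sum_congr rfl fun θ _ => ?_
    congr 1
    exact (dev_eq_keep' i (fun c b => lamf (i, c, b)) σ (hσst i) (fun a => u i (a, θ))).symm
  have := hkey pstar hpS
  rw [hzero] at this
  exact lt_irrefl 0 this

end Aux


section Symm

variable {I : Type} [Fintype I] [DecidableEq I] {A : Type} [Fintype A]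
  [DecidableEq A] [Nonempty A] {Θ : Type} [Fintype Θ]

/-- Reindexing a weighted sum by a permutation of players. -/
lemma sum_mul_perm (v : I → ((I → A) × Θ) → ℝ) (p : ((I → A) × Θ) → ℝ)
    (φ : Equiv.Perm I) (i : I)
    (hv : ∀ (a : I → A) (θ : Θ), v i (a ∘ ⇑φ⁻¹, θ) = v (φ⁻¹ i) (a, θ)) :
    ∑ x : (I → A) × Θ, v i x * p (x.1 ∘ ⇑φ, x.2)
      = ∑ x : (I → A) × Θ, v (φ⁻¹ i) x * p x := by
  classical
  set E : ((I → A) × Θ) ≃ ((I → A) × Θ) :=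
    Equiv.prodCongr (Equiv.arrowCongr (φ : I ≃ I) (Equiv.refl A)) (Equiv.refl Θ) with hE
  set F : ((I → A) × Θ) → ℝ := fun x => v i x * p (x.1 ∘ ⇑φ, x.2) with hF
  have hpt : ∀ x : (I → A) × Θ, F (E x) = v (φ⁻¹ i) x * p x := by
    rintro ⟨a, θ⟩
    have hEx : E (a, θ) = (a ∘ ⇑φ⁻¹, θ) := by
      simp only [hE, Equiv.prodCongr_apply, Equiv.coe_refl, Prod.map]
      congr 1
    rw [hF, hEx]
    simp only
    have hcomp : (a ∘ ⇑φ⁻¹) ∘ ⇑φ = a := by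
      funext j; simp
    rw [hcomp, hv a θ]
  calc ∑ x : (I → A) × Θ, F x
      = ∑ x : (I → A) × Θ, F (E x) := (Equiv.sum_comp E F).symm
    _ = ∑ x : (I → A) × Θ, v (φ⁻¹ i) x * p x :=
        Finset.sum_congr rfl fun x _ => hpt x

/-- Equivariance of the obedience integrand. -/
lemma obIntegrand_equivariant (u : I → ((I → A) × Θ) → ℝ)
    (hsym : ∀ (φ : Equiv.Perm I) (i : I) (a : I → A) (θ : Θ),
      u i (a ∘ φ, θ) = u (φ i) (a, θ))
    (φ : Equiv.Perm I) (i : I) (ai bi : A) (a : I → A) (θ : Θ) :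
    (fun j (x : (I → A) × Θ) => if x.1 j = ai
        then u j x - u j (Function.update x.1 j bi, x.2) else 0) i (a ∘ ⇑φ⁻¹, θ)
    = (fun j (x : (I → A) × Θ) => if x.1 j = ai
        then u j x - u j (Function.update x.1 j bi, x.2) else 0) (φ⁻¹ i) (a, θ) := by
  simp only
  have h1 : (a ∘ ⇑φ⁻¹) i = a (φ⁻¹ i) := rfl
  have h2 : u i (a ∘ ⇑φ⁻¹, θ) = u (φ⁻¹ i) (a, θ) := hsym φ⁻¹ i a θ
  have h3 : u i (Function.update (a ∘ ⇑φ⁻¹) i bi, θ)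
      = u (φ⁻¹ i) (Function.update a (φ⁻¹ i) bi, θ) := by
    rw [update_comp_perm' a φ⁻¹ i bi]
    exact hsym φ⁻¹ i (Function.update a (φ⁻¹ i) bi) θ
  rw [h1, h2, h3]

/-- The symmetrization of a BCE. -/
lemma symmetrize (π : Θ → ℝ) (u : I → ((I → A) × Θ) → ℝ)
    (hsym : ∀ (φ : Equiv.Perm I) (i : I) (a : I → A) (θ : Θ),
      u i (a ∘ φ, θ) = u (φ i) (a, θ))
    (p : ((I → A) × Θ) → ℝ) (hout : IsOutcome π p) (hob : Obedient u p) :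
    ∃ q : ((I → A) × Θ) → ℝ, IsOutcome π q ∧ Obedient u q ∧ SymmOutcome q ∧
      wbar u q = wbar u p ∧ wund u q ≤ wund u p := by
  classical
  set N : ℝ := (Fintype.card (Equiv.Perm I) : ℝ) with hN
  have hNpos : 0 < N := by
    rw [hN]; exact_mod_cast Fintype.card_pos
  set q : ((I → A) × Θ) → ℝ :=
    fun x => N⁻¹ * ∑ φ : Equiv.Perm I, p (x.1 ∘ ⇑φ, x.2) with hq
  refine ⟨q, ⟨?_, ?_⟩, ?_, ?_, ?_, ?_⟩
  -- nonnegativity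
  · intro x
    exact mul_nonneg (inv_nonneg.2 hNpos.le)
      (Finset.sum_nonneg fun φ _ => hout.1 _)
  -- marginal
  · intro θ
    simp only [hq]
    rw [← Finset.mul_sum, Finset.sum_comm]
    have : ∀ φ : Equiv.Perm I, ∑ a : I → A, p (a ∘ ⇑φ, θ) = π θ := by
      intro φ
      rw [sum_comp_perm' (fun a => p (a, θ)) φ]
      exact hout.2 θ
    rw [Finset.sum_congr rfl fun φ _ => this φ, Finset.sum_const, Finset.card_univ,
      nsmul_eq_mul, ← hN, inv_mul_cancel_left₀ (ne_of_gt hNpos)]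
  -- obedience
  · intro i ai bi
    set v : I → ((I → A) × Θ) → ℝ := fun j x => if x.1 j = ai
        then u j x - u j (Function.update x.1 j bi, x.2) else 0 with hv
    have hexp : ∀ x : (I → A) × Θ,
        (if x.1 i = ai then (u i x - u i (Function.update x.1 i bi, x.2)) * q x else 0)
        = N⁻¹ * ∑ φ : Equiv.Perm I, v i x * p (x.1 ∘ ⇑φ, x.2) := by
      intro x
      by_cases h : x.1 i = ai
      · simp only [h, if_true, hq, hv, Finset.mul_sum]
        exact Finset.sum_congr rfl fun φ _ => by ring
      · simp [h, hv]
    rw [Finset.sum_congr rfl fun x _ => hexp x, ← Finset.mul_sum, Finset.sum_comm]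
    refine mul_nonneg (inv_nonneg.2 hNpos.le) (Finset.sum_nonneg fun φ _ => ?_)
    rw [sum_mul_perm v p φ i (fun a θ => obIntegrand_equivariant u hsym φ i ai bi a θ)]
    have := hob (φ⁻¹ i) ai bi
    calc (0:ℝ) ≤ ∑ x : (I → A) × Θ, (if x.1 (φ⁻¹ i) = ai
        then (u (φ⁻¹ i) x - u (φ⁻¹ i) (Function.update x.1 (φ⁻¹ i) bi, x.2)) * p x
        else 0) := this
    _ = ∑ x : (I → A) × Θ, v (φ⁻¹ i) x * p x := by
        refine Finset.sum_congr rfl fun x _ => ?_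
        rw [hv]; simp only [ite_mul, zero_mul]
  -- symmetry
  · intro ψ a θ
    simp only [hq]
    congr 1
    have e : ∀ φ : Equiv.Perm I, (a ∘ ⇑ψ) ∘ ⇑φ = a ∘ ⇑(ψ * φ) := by
      intro φ; funext j; simp [Function.comp, Equiv.Perm.mul_apply]
    rw [Finset.sum_congr rfl fun φ _ => by rw [e φ]]
    exact Equiv.sum_comp (Equiv.mulLeft ψ) (fun φ => p (a ∘ ⇑φ, θ))
  -- wbar equal
  · have hterm : ∀ i : I, ∑ x : (I → A) × Θ, u i x * q x
        = N⁻¹ * ∑ φ : Equiv.Perm I, ∑ x : (I → A) × Θ, u i x * p (x.1 ∘ ⇑φ, x.2) := by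
      intro i
      have e : ∀ x : (I → A) × Θ, u i x * q x
          = ∑ φ : Equiv.Perm I, N⁻¹ * (u i x * p (x.1 ∘ ⇑φ, x.2)) := by
        intro x
        simp only [hq, Finset.mul_sum]
        exact Finset.sum_congr rfl fun φ _ => by ring
      calc ∑ x : (I → A) × Θ, u i x * q x
          = ∑ φ : Equiv.Perm I, ∑ x : (I → A) × Θ, N⁻¹ * (u i x * p (x.1 ∘ ⇑φ, x.2)) := by
            rw [Finset.sum_congr rfl fun x _ => e x, Finset.sum_comm]
        _ = ∑ φ : Equiv.Perm I, N⁻¹ * ∑ x : (I → A) × Θ, u i x * p (x.1 ∘ ⇑φ, x.2) := by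
            refine Finset.sum_congr rfl fun φ _ => ?_
            rw [Finset.mul_sum]
        _ = N⁻¹ * ∑ φ : Equiv.Perm I, ∑ x : (I → A) × Θ, u i x * p (x.1 ∘ ⇑φ, x.2) := by
            rw [Finset.mul_sum]
    have hφ : ∀ φ : Equiv.Perm I, ∑ i : I, ∑ x : (I → A) × Θ, u i x * p (x.1 ∘ ⇑φ, x.2)
        = wbar u p := by
      intro φ
      have e1 : ∀ i : I, ∑ x : (I → A) × Θ, u i x * p (x.1 ∘ ⇑φ, x.2)
          = ∑ x : (I → A) × Θ, u (φ⁻¹ i) x * p x :=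
        fun i => sum_mul_perm u p φ i (fun a θ => hsym φ⁻¹ i a θ)
      rw [Finset.sum_congr rfl fun i _ => e1 i]
      exact Equiv.sum_comp (φ⁻¹ : Equiv.Perm I)
        (fun j => ∑ x : (I → A) × Θ, u j x * p x)
    calc wbar u q = ∑ i : I, ∑ x : (I → A) × Θ, u i x * q x := rfl
    _ = ∑ i : I, N⁻¹ * ∑ φ : Equiv.Perm I, ∑ x : (I → A) × Θ, u i x * p (x.1 ∘ ⇑φ, x.2) :=
        Finset.sum_congr rfl fun i _ => hterm i
    _ = N⁻¹ * ∑ φ : Equiv.Perm I, ∑ i : I, ∑ x : (I → A) × Θ, u i x * p (x.1 ∘ ⇑φ, x.2) := by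
        rw [← Finset.mul_sum, Finset.sum_comm]
    _ = N⁻¹ * ∑ φ : Equiv.Perm I, wbar u p := by
        rw [Finset.sum_congr rfl fun φ _ => hφ φ]
    _ = wbar u p := by
        rw [Finset.sum_const, Finset.card_univ, nsmul_eq_mul, ← hN,
          inv_mul_cancel_left₀ (ne_of_gt hNpos)]
  -- wund ≤
  · set M : I → ℝ := fun j => univ.sup' Finset.univ_nonempty fun b : A =>
      ∑ x : (I → A) × Θ, u j (Function.update x.1 j b, x.2) * p x with hM
    have hinner : ∀ (i : I) (bi : A),
        ∑ x : (I → A) × Θ, u i (Function.update x.1 i bi, x.2) * q x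
        ≤ N⁻¹ * ∑ φ : Equiv.Perm I, M (φ⁻¹ i) := by
      intro i bi
      have hlin : ∑ x : (I → A) × Θ, u i (Function.update x.1 i bi, x.2) * q x
          = N⁻¹ * ∑ φ : Equiv.Perm I, ∑ x : (I → A) × Θ,
              u i (Function.update x.1 i bi, x.2) * p (x.1 ∘ ⇑φ, x.2) := by
        have e : ∀ x : (I → A) × Θ, u i (Function.update x.1 i bi, x.2) * q x
            = ∑ φ : Equiv.Perm I,
                N⁻¹ * (u i (Function.update x.1 i bi, x.2) * p (x.1 ∘ ⇑φ, x.2)) := by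
          intro x
          simp only [hq, Finset.mul_sum]
          exact Finset.sum_congr rfl fun φ _ => by ring
        calc ∑ x : (I → A) × Θ, u i (Function.update x.1 i bi, x.2) * q x
            = ∑ φ : Equiv.Perm I, ∑ x : (I → A) × Θ,
                N⁻¹ * (u i (Function.update x.1 i bi, x.2) * p (x.1 ∘ ⇑φ, x.2)) := by
              rw [Finset.sum_congr rfl fun x _ => e x, Finset.sum_comm]
          _ = ∑ φ : Equiv.Perm I, N⁻¹ * ∑ x : (I → A) × Θ,
                u i (Function.update x.1 i bi, x.2) * p (x.1 ∘ ⇑φ, x.2) := by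
              refine Finset.sum_congr rfl fun φ _ => ?_
              rw [Finset.mul_sum]
          _ = N⁻¹ * ∑ φ : Equiv.Perm I, ∑ x : (I → A) × Θ,
                u i (Function.update x.1 i bi, x.2) * p (x.1 ∘ ⇑φ, x.2) := by
              rw [Finset.mul_sum]
      rw [hlin]
      refine mul_le_mul_of_nonneg_left (Finset.sum_le_sum fun φ _ => ?_)
        (inv_nonneg.2 hNpos.le)
      set v : I → ((I → A) × Θ) → ℝ :=
        fun j x => u j (Function.update x.1 j bi, x.2) with hv
      have hveq : ∀ (a : I → A) (θ : Θ), v i (a ∘ ⇑φ⁻¹, θ) = v (φ⁻¹ i) (a, θ) := by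
        intro a θ
        simp only [hv]
        rw [update_comp_perm' a φ⁻¹ i bi]
        exact hsym φ⁻¹ i (Function.update a (φ⁻¹ i) bi) θ
      rw [sum_mul_perm v p φ i hveq]
      exact Finset.le_sup' (fun b : A =>
        ∑ x : (I → A) × Θ, u (φ⁻¹ i) (Function.update x.1 (φ⁻¹ i) b, x.2) * p x)
        (mem_univ bi)
    have hsup : ∀ i : I,
        (univ.sup' Finset.univ_nonempty fun bi : A =>
          ∑ x : (I → A) × Θ, u i (Function.update x.1 i bi, x.2) * q x)
        ≤ N⁻¹ * ∑ φ : Equiv.Perm I, M (φ⁻¹ i) :=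
      fun i => Finset.sup'_le _ _ fun bi _ => hinner i bi
    calc wund u q ≤ ∑ i : I, N⁻¹ * ∑ φ : Equiv.Perm I, M (φ⁻¹ i) :=
        Finset.sum_le_sum fun i _ => hsup i
    _ = N⁻¹ * ∑ φ : Equiv.Perm I, ∑ i : I, M (φ⁻¹ i) := by
        rw [← Finset.mul_sum, Finset.sum_comm]
    _ = N⁻¹ * ∑ φ : Equiv.Perm I, wund u p := by
        congr 1
        refine Finset.sum_congr rfl fun φ _ => ?_
        exact Equiv.sum_comp (φ⁻¹ : Equiv.Perm I) M
    _ = wund u p := by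
        rw [Finset.sum_const, Finset.card_univ, nsmul_eq_mul, ← hN,
          inv_mul_cancel_left₀ (ne_of_gt hNpos)]

end Symm

section Main

variable {I : Type} [Fintype I] [DecidableEq I] {A : Type} [Fintype A]
  [DecidableEq A] [Nonempty A] {Θ : Type} [Fintype Θ]

lemma obedient_closed (u : I → ((I → A) × Θ) → ℝ) :
    IsClosed {p : ((I → A) × Θ) → ℝ | Obedient u p} := by
  have e : {p : ((I → A) × Θ) → ℝ | Obedient u p}
      = ⋂ k : I × A × A, {p | 0 ≤ ∑ x : (I → A) × Θ, coefOb u k x * p x} := by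
    ext p
    simp only [Set.mem_setOf_eq, Set.mem_iInter]
    exact obedient_iff' u p
  rw [e]
  refine isClosed_iInter fun k => isClosed_le continuous_const ?_
  exact continuous_finset_sum _ fun x _ => continuous_const.mul (continuous_apply x)

lemma wbar_continuous (u : I → ((I → A) × Θ) → ℝ) : Continuous (wbar u) :=
  continuous_finset_sum _ fun i _ =>
    continuous_finset_sum _ fun x _ => continuous_const.mul (continuous_apply x)

lemma wund_continuous (u : I → ((I → A) × Θ) → ℝ) : Continuous (wund u) := by
  have hc : ∀ (i : I) (bi : A),
      Continuous fun p : ((I → A) × Θ) → ℝ =>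
        ∑ x : (I → A) × Θ, u i (Function.update x.1 i bi, x.2) * p x :=
    fun i bi => continuous_finset_sum _ fun x _ => continuous_const.mul (continuous_apply x)
  refine continuous_finset_sum _ fun i _ => ?_
  refine continuous_iff_continuousAt.2 fun p => ?_
  exact Filter.Tendsto.finset_sup'_nhds_apply Finset.univ_nonempty (fun bi _ => ((hc i bi).tendsto p))

/-- in a symmetric base game, every BCE `p` admits a symmetric
BCE `q` with the same gross welfare and weakly lower uninformed welfare;
consequently, the minimum of `w̄` and the minimum of `w̲` over BCEs are
attained at symmetric BCEs. -/
theorem stmt12 {I : Type} [Fintype I] [DecidableEq I] {A : Type} [Fintype A]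
    [DecidableEq A] [Nonempty A] {Θ : Type} [Fintype Θ]
    (π : Θ → ℝ) (hπpos : ∀ θ, 0 < π θ) (hπ1 : ∑ θ, π θ = 1)
    (u : I → ((I → A) × Θ) → ℝ)
    (hsym : ∀ (φ : Equiv.Perm I) (i : I) (a : I → A) (θ : Θ),
      u i (a ∘ φ, θ) = u (φ i) (a, θ)) :
    (∀ p : ((I → A) × Θ) → ℝ, IsOutcome π p → Obedient u p →
      ∃ q : ((I → A) × Θ) → ℝ, IsOutcome π q ∧ Obedient u q ∧ SymmOutcome q ∧
        wbar u q = wbar u p ∧ wund u q ≤ wund u p) ∧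
    (∃ q : ((I → A) × Θ) → ℝ, IsOutcome π q ∧ Obedient u q ∧ SymmOutcome q ∧
      ∀ p : ((I → A) × Θ) → ℝ, IsOutcome π p → Obedient u p →
        wbar u q ≤ wbar u p) ∧
    (∃ q : ((I → A) × Θ) → ℝ, IsOutcome π q ∧ Obedient u q ∧ SymmOutcome q ∧
      ∀ p : ((I → A) × Θ) → ℝ, IsOutcome π p → Obedient u p →
        wund u q ≤ wund u p) := by
  classical
  set SB : Set (((I → A) × Θ) → ℝ) := {p | IsOutcome π p ∧ Obedient u p} with hSB
  have hSBeq : SB = {p : ((I → A) × Θ) → ℝ | IsOutcome π p}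
      ∩ {p | Obedient u p} := rfl
  have hSBcomp : IsCompact SB := by
    rw [hSBeq]
    exact (outcome_compact π).inter_right (obedient_closed u)
  have hSBne : SB.Nonempty := by
    obtain ⟨p, h1, h2⟩ := exists_BCE π hπpos u
    exact ⟨p, h1, h2⟩
  refine ⟨fun p h1 h2 => symmetrize π u hsym p h1 h2, ?_, ?_⟩
  · obtain ⟨p₀, hp₀, hmin⟩ :=
      hSBcomp.exists_isMinOn hSBne (wbar_continuous u).continuousOn
    obtain ⟨q, hqo, hqob, hqsym, hqbar, -⟩ :=
      symmetrize π u hsym p₀ hp₀.1 hp₀.2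
    refine ⟨q, hqo, hqob, hqsym, fun p h1 h2 => ?_⟩
    rw [hqbar]
    exact isMinOn_iff.1 hmin p ⟨h1, h2⟩
  · obtain ⟨p₀, hp₀, hmin⟩ :=
      hSBcomp.exists_isMinOn hSBne (wund_continuous u).continuousOn
    obtain ⟨q, hqo, hqob, hqsym, -, hqund⟩ :=
      symmetrize π u hsym p₀ hp₀.1 hp₀.2
    refine ⟨q, hqo, hqob, hqsym, fun p h1 h2 => ?_⟩
    exact le_trans hqund (isMinOn_iff.1 hmin p ⟨h1, h2⟩)

end Main
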